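/- arXiv:0804.0608 — 3 statements merged into one kernel-verified Lean document; each statement's English description precedes it below -/
import Mathlib

section
/- Let A be a finite-dimensional commutative Frobenius algebra over a field k that is semi-simple with a complete system of orthogonal idempotents e_1,…,e_n forming a basis, and set λ_i := ⟨e_i, 1⟩. Then the Euler element of A equals Σ_i λ_i^{-1} e_i. In particular, the Euler element is invertible. -/
/-!
Write `e = ∑ xᵢ yᵢ` and `λₗ = ⟨εₗ, 1⟩`. Since `εₗ a` is the `εₗ`-coordinate of `a` times `εₗ`,
invariance gives `⟨εₗ, a⟩ = aₗ λₗ`, so the coordinates of `e` are read off from `⟨εₗ, e⟩`.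
By invariance again `⟨εₗ, e⟩ = ∑ᵢ ⟨εₗ xᵢ, yᵢ⟩ = ∑ᵢ (xᵢ)ₗ ⟨εₗ, yᵢ⟩`, which is the `εₗ`-coordinate
of `∑ᵢ ⟨εₗ, yᵢ⟩ xᵢ = εₗ`, i.e. `1`. Hence `e = ∑ λₗ⁻¹ εₗ`, whose inverse is `∑ λₗ εₗ`.
-/

open Finset

namespace Module.Basis

theorem sum_apply_smul_eq_of_dual {R M ι : Type*} [CommSemiring R] [AddCommMonoid M] [Module R M]
    [Fintype ι] [DecidableEq ι] (B : M →ₗ[R] M →ₗ[R] R) (x : Basis ι R M) (y : ι → M)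
    (hdual : ∀ i j, B (x i) (y j) = if i = j then 1 else 0) (a : M) :
    ∑ i, B a (y i) • x i = a := by
  suffices h : ∑ i, (B.flip (y i)).smulRight (x i) = LinearMap.id by
    simpa using congr($h a)
  exact x.ext fun j => by simp [hdual]

section Idempotent

variable {R A ι : Type*} [CommSemiring R] [Semiring A] [Algebra R A] [Fintype ι] [DecidableEq ι]

theorem mul_eq_repr_smul_of_idempotent (ε : Basis ι R A)
    (hidem : ∀ i j, ε i * ε j = if i = j then ε i else 0) (i : ι) (a : A) :
    ε i * a = ε.repr a i • ε i := by
  conv_lhs => rw [← ε.sum_repr a, mul_sum]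
  simp only [mul_smul_comm, hidem, smul_ite, smul_zero, sum_ite_eq, mem_univ, if_true]

theorem apply_eq_repr_mul_of_idempotent (B : A →ₗ[R] A →ₗ[R] R)
    (hinv : ∀ a b c : A, B (a * b) c = B a (b * c)) (ε : Basis ι R A)
    (hidem : ∀ i j, ε i * ε j = if i = j then ε i else 0) (i : ι) (a : A) :
    B (ε i) a = ε.repr a i * B (ε i) 1 := by
  rw [← mul_one a, ← hinv, mul_eq_repr_smul_of_idempotent ε hidem, mul_one, map_smul,
    LinearMap.smul_apply, smul_eq_mul]

theorem apply_idempotent_sum_mul_dual (B : A →ₗ[R] A →ₗ[R] R)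
    (hinv : ∀ a b c : A, B (a * b) c = B a (b * c)) (ε : Basis ι R A)
    (hidem : ∀ i j, ε i * ε j = if i = j then ε i else 0) (x : Basis ι R A) (y : ι → A)
    (hdual : ∀ i j, B (x i) (y j) = if i = j then 1 else 0) (l : ι) :
    B (ε l) (∑ i, x i * y i) = 1 := by
  calc B (ε l) (∑ i, x i * y i)
      = ∑ i, ε.repr (x i) l * B (ε l) (y i) := by
        simp only [map_sum, ← hinv, mul_eq_repr_smul_of_idempotent ε hidem, map_smul,
          LinearMap.smul_apply, smul_eq_mul]
    _ = ε.repr (∑ i, B (ε l) (y i) • x i) l := by simp [mul_comm]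
    _ = 1 := by rw [sum_apply_smul_eq_of_dual B x y hdual, ε.repr_self, Finsupp.single_eq_same]

end Idempotent

end Module.Basis

section OrthogonalIdempotents

variable {R A ι : Type*} [CommSemiring R] [Semiring A] [Algebra R A] [Fintype ι] [DecidableEq ι]

theorem sum_smul_mul_sum_smul_of_idempotent (ε : ι → A)
    (hidem : ∀ i j, ε i * ε j = if i = j then ε i else 0) (c d : ι → R) :
    (∑ i, c i • ε i) * ∑ i, d i • ε i = ∑ i, (c i * d i) • ε i := by
  simp [sum_mul_sum, hidem, smul_smul, mul_comm]

theorem isUnit_sum_smul_of_idempotent (ε : ι → A)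
    (hidem : ∀ i j, ε i * ε j = if i = j then ε i else 0) (hone : ∑ i, ε i = 1) {c : ι → R}
    (hc : ∀ i, IsUnit (c i)) : IsUnit (∑ i, c i • ε i) := by
  refine isUnit_iff_exists.mpr ⟨∑ i, (↑(hc i).unit⁻¹ : R) • ε i, ?_, ?_⟩ <;>
    simp [sum_smul_mul_sum_smul_of_idempotent ε hidem, hone]

end OrthogonalIdempotents

theorem stmt_2_general {k A : Type} [Field k] [CommRing A] [Algebra k A]
    (B : A →ₗ[k] A →ₗ[k] k)
    (hinv : ∀ a b c : A, B (a * b) c = B a (b * c))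
    {n : ℕ}
    (ε : Module.Basis (Fin n) k A)
    (hidem : ∀ i j, ε i * ε j = if i = j then ε i else 0)
    (hone : ∑ i, ε i = 1)
    (hlam : ∀ i, B (ε i) 1 ≠ 0)
    (x : Module.Basis (Fin n) k A) (y : Module.Basis (Fin n) k A)
    (hdual : ∀ i j, B (x i) (y j) = if i = j then 1 else 0) :
    (∑ i, x i * y i = ∑ i, (B (ε i) 1)⁻¹ • ε i) ∧
    IsUnit (∑ i, x i * y i) := by
  have hcoord : ∀ l, ε.repr (∑ i, x i * y i) l = (B (ε l) 1)⁻¹ := fun l => by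
    have h := ε.apply_idempotent_sum_mul_dual B hinv hidem x y hdual l
    rw [ε.apply_eq_repr_mul_of_idempotent B hinv hidem] at h
    exact eq_inv_of_mul_eq_one_left h
  have heuler : ∑ i, x i * y i = ∑ i, (B (ε i) 1)⁻¹ • ε i := by
    conv_lhs => rw [← ε.sum_repr (∑ i, x i * y i)]
    simp only [hcoord]
  exact ⟨heuler, heuler ▸ isUnit_sum_smul_of_idempotent ε hidem hone
    fun i => (inv_ne_zero (hlam i)).isUnit⟩

/-- For a semi-simple commutative Frobenius algebra with a
complete system of orthogonal idempotents `ε₁,…,εₙ` forming a basis and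
`λᵢ = ⟨εᵢ,1⟩`, the Euler element `e = ∑ xᵢ * yᵢ` equals `∑ λᵢ⁻¹ • εᵢ`;
in particular it is invertible. -/
theorem stmt_2 {k A : Type} [Field k] [CommRing A] [Algebra k A]
    (B : A →ₗ[k] A →ₗ[k] k)
    (hinv : ∀ a b c : A, B (a * b) c = B a (b * c))
    (hnd : ∀ a : A, (∀ b : A, B a b = 0) → a = 0)
    {n : ℕ}
    (ε : Module.Basis (Fin n) k A)
    (hidem : ∀ i j, ε i * ε j = if i = j then ε i else 0)
    (hone : ∑ i, ε i = 1)
    (hlam : ∀ i, B (ε i) 1 ≠ 0)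
    (x : Module.Basis (Fin n) k A) (y : Module.Basis (Fin n) k A)
    (hdual : ∀ i j, B (x i) (y j) = if i = j then 1 else 0) :
    (∑ i, x i * y i = ∑ i, (B (ε i) 1)⁻¹ • ε i) ∧
    IsUnit (∑ i, x i * y i) :=
  stmt_2_general B hinv ε hidem hone hlam x y hdual
end

section
/- Let A be a finite-dimensional commutative Frobenius algebra. The Euler element e of A is invertible if and only if A is semi-simple, provided k is algebraically closed of characteristic zero. -/
/-!
Let `e = ∑ xᵢ yᵢ` and write `L_a` for multiplication by `a`. Expanding the trace of `L_a` in the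
basis `x` gives `tr L_a = B(a, e)`, hence `tr L_{ab} = B(ae, b)`.

If `e` is a unit and `a` is nilpotent, every `L_{ab}` is nilpotent, so `B(ae, ·) = 0`; by
nondegeneracy `ae = 0`, and so `a = 0`. Conversely, if `A` is reduced then it is semisimple, so a
nonzero annihilator of `e` would give a nonzero idempotent `u` with `ue = 0`. Then
`tr L_u = B(ue, u) = 0`, while in characteristic zero the trace of the projection `L_u` is its rank.
So `e` is a non-zero-divisor, hence a unit since `A` is Artinian. Finally, in an Artinian ring the
Jacobson radical is the nilradical.
-/

open LinearMap nonZeroDivisors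

theorem mem_nonZeroDivisors_of_forall_isIdempotentElem {R : Type*} [CommRing R]
    [IsSemisimpleRing R] {r : R} (h : ∀ u : R, IsIdempotentElem u → u * r = 0 → u = 0) :
    r ∈ R⁰ := by
  refine mem_nonZeroDivisors_iff_right.mpr fun a ha => ?_
  obtain ⟨u, hu, hspan⟩ := IsSemisimpleRing.ideal_eq_span_idempotent (Ideal.span {a})
  have hu_mem : u ∈ Ideal.span {a} := hspan ▸ Ideal.mem_span_singleton_self u
  obtain ⟨c, rfl⟩ := Ideal.mem_span_singleton'.mp hu_mem
  have ha_mem : a ∈ Ideal.span {c * a} := hspan ▸ Ideal.mem_span_singleton_self a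
  rwa [h _ hu (by rw [mul_assoc, ha, mul_zero]), Ideal.span_singleton_eq_bot.mpr rfl,
    Ideal.mem_bot] at ha_mem

section Trace

variable {k A : Type*} [Field k] [Ring A] [Algebra k A]

theorem IsNilpotent.trace_mulLeft_eq_zero {a : A} (ha : IsNilpotent a) :
    trace k A (mulLeft k a) = 0 :=
  (isNilpotent_trace_of_isNilpotent (ha.map (Algebra.lmul k A))).eq_zero

theorem IsIdempotentElem.eq_zero_of_trace_mulLeft_eq_zero [CharZero k] [FiniteDimensional k A]
    {u : A} (hu : IsIdempotentElem u) (htr : trace k A (mulLeft k u) = 0) : u = 0 := by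
  have h : mulLeft k u = 0 := (hu.map (Algebra.lmul k A)).eq_zero_of_trace_eq_zero htr
  simpa using congr($h 1)

end Trace

namespace FrobeniusAlgebra

section

variable {k : Type*} [Field k] {n : ℕ}

theorem apply_dualBasis_eq_repr {M : Type*} [AddCommGroup M] [Module k M]
    (B : M →ₗ[k] M →ₗ[k] k) {x y : Module.Basis (Fin n) k M}
    (hdual : ∀ i j, B (x i) (y j) = if i = j then 1 else 0) (v : M) (i : Fin n) :
    B v (y i) = x.repr v i := by
  conv_lhs => rw [← x.sum_repr v]
  simp only [map_sum, map_smul, LinearMap.sum_apply, LinearMap.smul_apply, hdual, smul_eq_mul,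
    mul_ite, mul_one, mul_zero, Finset.sum_ite_eq', Finset.mem_univ, if_true]

theorem trace_mulLeft_eq {A : Type*} [Ring A] [Algebra k A] {B : A →ₗ[k] A →ₗ[k] k}
    (hinv : ∀ a b c : A, B (a * b) c = B a (b * c)) {x y : Module.Basis (Fin n) k A}
    (hdual : ∀ i j, B (x i) (y j) = if i = j then 1 else 0) (a : A) :
    trace k A (mulLeft k a) = B a (∑ i, x i * y i) := by
  classical
  rw [trace_eq_matrix_trace k x, Matrix.trace, map_sum]
  refine Finset.sum_congr rfl fun i _ => ?_
  rw [Matrix.diag_apply, toMatrix_apply, mulLeft_apply, ← apply_dualBasis_eq_repr B hdual, hinv]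

end

variable {k A : Type*} [Field k] [CommRing A] [Algebra k A] (B : A →ₗ[k] A →ₗ[k] k)
  (hinv : ∀ a b c : A, B (a * b) c = B a (b * c))
  {n : ℕ} {x y : Module.Basis (Fin n) k A}
  (hdual : ∀ i j, B (x i) (y j) = if i = j then 1 else 0)
include hinv hdual

theorem trace_mulLeft_mul_eq (a b : A) :
    trace k A (mulLeft k (a * b)) = B (a * ∑ i, x i * y i) b := by
  rw [trace_mulLeft_eq hinv hdual, hinv, mul_comm b, ← hinv]

theorem isReduced_of_isUnit_euler (hnd : ∀ a : A, (∀ b : A, B a b = 0) → a = 0)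
    (he : IsUnit (∑ i, x i * y i)) : IsReduced A := by
  refine ⟨fun a ha => ?_⟩
  have hae : a * ∑ i, x i * y i = 0 := hnd _ fun b => by
    rw [← trace_mulLeft_mul_eq B hinv hdual]
    exact ((Commute.all a b).isNilpotent_mul_right ha).trace_mulLeft_eq_zero
  exact he.mul_left_eq_zero.mp hae

theorem isUnit_euler_of_isReduced [CharZero k] [IsReduced A] : IsUnit (∑ i, x i * y i) := by
  have : FiniteDimensional k A := Module.Finite.of_basis x
  have : IsArtinianRing A := .of_finite k A
  have := IsArtinianRing.isSemisimpleRing_of_isReduced A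
  refine IsArtinianRing.isUnit_iff_mem_nonZeroDivisors.mpr
    (mem_nonZeroDivisors_of_forall_isIdempotentElem fun u hu hue => ?_)
  refine hu.eq_zero_of_trace_mulLeft_eq_zero (k := k) ?_
  rw [← hu.eq, trace_mulLeft_mul_eq B hinv hdual, hue, map_zero, LinearMap.zero_apply]

end FrobeniusAlgebra

theorem stmt_6_general {k A : Type} [Field k] [CharZero k]
    [CommRing A] [Algebra k A]
    (B : A →ₗ[k] A →ₗ[k] k)
    (hinv : ∀ a b c : A, B (a * b) c = B a (b * c))
    (hnd : ∀ a : A, (∀ b : A, B a b = 0) → a = 0)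
    {n : ℕ} (x : Module.Basis (Fin n) k A) (y : Module.Basis (Fin n) k A)
    (hdual : ∀ i j, B (x i) (y j) = if i = j then 1 else 0) :
    IsUnit (∑ i, x i * y i) ↔ (⊥ : Ideal A).jacobson = ⊥ := by
  have : Module.Finite k A := .of_basis x
  have : IsArtinianRing A := .of_finite k A
  rw [Ideal.jacobson_bot, Ring.jacobson_eq_nilradical_of_krullDimLE_zero, nilradical_eq_bot_iff]
  exact ⟨FrobeniusAlgebra.isReduced_of_isUnit_euler B hinv hdual hnd,
    fun _ => FrobeniusAlgebra.isUnit_euler_of_isReduced B hinv hdual⟩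

/-- Over an algebraically closed field of characteristic zero, the
Euler element `e = ∑ xᵢ * yᵢ` of a finite-dimensional commutative Frobenius
algebra is invertible if and only if the algebra is semi-simple (its Jacobson
radical vanishes). -/
theorem stmt_6 {k A : Type} [Field k] [IsAlgClosed k] [CharZero k]
    [CommRing A] [Algebra k A]
    (B : A →ₗ[k] A →ₗ[k] k)
    (hinv : ∀ a b c : A, B (a * b) c = B a (b * c))
    (hnd : ∀ a : A, (∀ b : A, B a b = 0) → a = 0)
    {n : ℕ} (x : Module.Basis (Fin n) k A) (y : Module.Basis (Fin n) k A)
    (hdual : ∀ i j, B (x i) (y j) = if i = j then 1 else 0) :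
    IsUnit (∑ i, x i * y i) ↔ (⊥ : Ideal A).jacobson = ⊥ :=
  stmt_6_general B hinv hnd x y hdual
end

section
/- If A is a normalized semi-simple commutative Frobenius algebra, then the 'BV vanishing' degree-one relation holds trivially for the TFT part in the sense that μ ∘ Δ = id, and hence the genus-adding operator (handle operator) has order 1; conversely, if μ ∘ Δ = id on a commutative Frobenius algebra A over an algebraically closed field of characteristic 0, then A is semi-simple and normalized (all λ_i = 1). -/
/-!
For any pair of dual bases `cᵢ, dᵢ` of `A` (`B(cᵢ, dⱼ) = δᵢⱼ`) the handle operator `μ ∘ Δ` is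
multiplication by the Euler element `e = ∑ cᵢ dᵢ`, and `B(w, e)` is the trace of multiplication
by `w`. For an orthogonal idempotent basis `εᵢ` with `λᵢ = B(εᵢ, 1)` the dual basis is
`λᵢ⁻¹ εᵢ`, so `μ Δ εᵢ = λᵢ⁻¹ εᵢ`; hence `μ ∘ Δ = id` exactly when every `λᵢ = 1`.
Conversely, if `μ ∘ Δ = id` then `e = 1`, so `B(w, 1)` vanishes on nilpotent `w`; by invariance
`B(w, ·)` vanishes too, and nondegeneracy makes `A` reduced. A reduced finite-dimensional algebra
over an algebraically closed field is `k × ⋯ × k`, which supplies the idempotent basis.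
-/

open TensorProduct Module

section DualBases

variable {k A ι : Type*} [Field k] [CommRing A] [Algebra k A] [Fintype ι] [DecidableEq ι]
  {B : LinearMap.BilinForm k A} {c : Basis ι k A} {d : ι → A}

theorem Module.Basis.repr_apply_eq_of_isDual (hcd : ∀ i j, B (c i) (d j) = if i = j then 1 else 0)
    (x : A) (j : ι) : c.repr x j = B x (d j) := by
  rw [show B x (d j) = B (∑ i, c.repr x i • c i) (d j) by rw [c.sum_repr]]
  simp only [map_sum, map_smul, LinearMap.sum_apply, LinearMap.smul_apply, hcd, smul_eq_mul,
    mul_ite, mul_one, mul_zero, Finset.sum_ite_eq', Finset.mem_univ, if_true]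

theorem Module.Basis.tensorProduct_repr_apply_eq_of_isDual
    (hcd : ∀ i j, B (c i) (d j) = if i = j then 1 else 0) (t : A ⊗[k] A) (i j : ι) :
    (c.tensorProduct c).repr t (i, j) = B.tmul B t (d i ⊗ₜ d j) := by
  induction t using TensorProduct.induction_on with
  | zero => simp
  | tmul x y => simp [c.repr_apply_eq_of_isDual hcd]
  | add s t hs ht => simp [hs, ht]

theorem mul'_apply_eq_mul_sum_of_isDual (hinv : ∀ a b c : A, B (a * b) c = B a (b * c))
    (hcd : ∀ i j, B (c i) (d j) = if i = j then 1 else 0)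
    (D : A →ₗ[k] A ⊗[k] A) (hadj : ∀ a x y : A, B.tmul B (D a) (x ⊗ₜ y) = B a (x * y))
    (a : A) : LinearMap.mul' k A (D a) = a * ∑ i, c i * d i := by
  have hD : D a = ∑ p : ι × ι, B (a * d p.1) (d p.2) • (c p.1 ⊗ₜ c p.2) := by
    conv_lhs => rw [← (c.tensorProduct c).sum_repr (D a)]
    simp [c.tensorProduct_repr_apply_eq_of_isDual hcd, hadj, hinv, Basis.tensorProduct_apply']
  have hexp : ∀ x, ∑ j, B x (d j) • c j = x := fun x => by
    simpa only [c.repr_apply_eq_of_isDual hcd] using c.sum_repr x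
  calc LinearMap.mul' k A (D a)
      = ∑ i, c i * ∑ j, B (a * d i) (d j) • c j := by
        simp only [hD, map_sum, map_smul, LinearMap.mul'_apply, Fintype.sum_prod_type,
          Finset.mul_sum, mul_smul_comm]
    _ = a * ∑ i, c i * d i := by simp only [hexp, Finset.mul_sum, mul_left_comm]

theorem trace_mulLeft_eq_of_isDual (hinv : ∀ a b c : A, B (a * b) c = B a (b * c))
    (hcd : ∀ i j, B (c i) (d j) = if i = j then 1 else 0)
    (w : A) : LinearMap.trace k A (LinearMap.mulLeft k w) = B w (∑ i, c i * d i) := by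
  rw [LinearMap.trace_eq_matrix_trace k c, Matrix.trace, map_sum]
  simp [Algebra.leftMulMatrix_eq_repr_mul, c.repr_apply_eq_of_isDual hcd, hinv]

end DualBases

section Wedderburn

variable (k A : Type*) [Field k] [IsAlgClosed k] [CommRing A] [Algebra k A] [Module.Finite k A]
  [IsReduced A]

noncomputable def algEquivPiOfIsReduced : A ≃ₐ[k] (MaximalSpectrum A → k) :=
  have : IsArtinianRing A := IsArtinianRing.of_finite k A
  ((IsArtinianRing.equivPi A).restrictScalars k).trans <| .piCongrRight fun I =>
    have := I.isMaximal
    (AlgEquiv.ofBijective (Algebra.ofId k _) IsAlgClosed.algebraMap_bijective_of_isIntegral).symm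

variable {k A}

theorem exists_basis_orthogonal_idempotents {ι : Type*} [Fintype ι] [DecidableEq ι]
    (b : Basis ι k A) :
    ∃ ε : Basis ι k A, (∀ i j, ε i * ε j = if i = j then ε i else 0) ∧ ∑ i, ε i = 1 := by
  classical
  have : IsArtinianRing A := IsArtinianRing.of_finite k A
  have : Fintype (MaximalSpectrum A) := Fintype.ofFinite _
  let e := algEquivPiOfIsReduced k A
  have hcard : Fintype.card (MaximalSpectrum A) = Fintype.card ι := by
    rw [← finrank_fintype_fun_eq_card k, ← e.toLinearEquiv.finrank_eq, finrank_eq_card_basis b]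
  let σ := Fintype.equivOfCardEq hcard
  refine ⟨((Pi.basisFun k _).map e.symm.toLinearEquiv).reindex σ, fun i j => ?_, ?_⟩
  · simp only [Basis.reindex_apply, Basis.map_apply, Pi.basisFun_apply,
      AlgEquiv.toLinearEquiv_apply, ← map_mul, ← Pi.single_mul_left, one_mul, Pi.single_apply,
      σ.symm.injective.eq_iff]
    split_ifs <;> simp
  · simp only [Basis.reindex_apply, Basis.map_apply, Pi.basisFun_apply,
      AlgEquiv.toLinearEquiv_apply, σ.symm.sum_comp (fun I => e.symm (Pi.single I 1)), ← map_sum,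
      Finset.univ_sum_single]
    exact map_one e.symm

end Wedderburn

section OrthogonalIdempotents

variable {k A ι : Type*} [Field k] [CommRing A] [Algebra k A] [DecidableEq ι]
  {B : LinearMap.BilinForm k A} {ε : Basis ι k A}

theorem apply_orthogonal_idempotents (hinv : ∀ a b c : A, B (a * b) c = B a (b * c))
    (hε : ∀ i j, ε i * ε j = if i = j then ε i else 0) (i j : ι) :
    B (ε i) (ε j) = if i = j then B (ε i) 1 else 0 := by
  rw [← mul_one (ε j), ← hinv, hε]
  split_ifs <;> simp

theorem apply_orthogonal_idempotent_one_ne_zero (hinv : ∀ a b c : A, B (a * b) c = B a (b * c))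
    (hε : ∀ i j, ε i * ε j = if i = j then ε i else 0) (hnd : B.SeparatingLeft) (i : ι) :
    B (ε i) 1 ≠ 0 := fun h =>
  ε.ne_zero i <| hnd _ fun x => by
    have hBε : B (ε i) = 0 := ε.ext fun j => by
      rw [apply_orthogonal_idempotents hinv hε, h, ite_self, LinearMap.zero_apply]
    rw [hBε, LinearMap.zero_apply]

theorem mul'_apply_orthogonal_idempotent [Fintype ι]
    (hinv : ∀ a b c : A, B (a * b) c = B a (b * c))
    (hε : ∀ i j, ε i * ε j = if i = j then ε i else 0) (hl : ∀ i, B (ε i) 1 ≠ 0)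
    (D : A →ₗ[k] A ⊗[k] A) (hadj : ∀ a x y : A, B.tmul B (D a) (x ⊗ₜ y) = B a (x * y)) (m : ι) :
    LinearMap.mul' k A (D (ε m)) = (B (ε m) 1)⁻¹ • ε m := by
  have hcd : ∀ i j, B (ε i) ((B (ε j) 1)⁻¹ • ε j) = if i = j then 1 else 0 := fun i j => by
    rw [map_smul, apply_orthogonal_idempotents hinv hε]
    split_ifs with h
    · subst h; exact inv_mul_cancel₀ (hl i)
    · simp
  rw [mul'_apply_eq_mul_sum_of_isDual hinv hcd D hadj]
  simp [Finset.mul_sum, hε]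

end OrthogonalIdempotents

theorem isReduced_of_mul'_apply_eq_self {k A : Type*} [Field k] [CommRing A] [Algebra k A]
    [Module.Finite k A] {B : LinearMap.BilinForm k A}
    (hinv : ∀ a b c : A, B (a * b) c = B a (b * c)) (hnd : B.SeparatingLeft)
    (D : A →ₗ[k] A ⊗[k] A) (hadj : ∀ a x y : A, B.tmul B (D a) (x ⊗ₜ y) = B a (x * y))
    (h : ∀ a, LinearMap.mul' k A (D a) = a) : IsReduced A := by
  let b := Module.finBasis k A
  let c := B.dualBasis (.ofSeparatingLeft hnd) b
  have hcb : ∀ i j, B (c i) (b j) = if i = j then 1 else 0 := fun i j => by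
    simp only [c, LinearMap.BilinForm.apply_dualBasis_left, eq_comm]
  have heuler : ∑ i, c i * b i = 1 := by
    simpa using (mul'_apply_eq_mul_sum_of_isDual hinv hcb D hadj 1).symm.trans (h 1)
  refine ⟨fun w hw => hnd w fun x => ?_⟩
  -- `B (w x) 1` is the trace of multiplication by the nilpotent element `w x`
  have hwx : IsNilpotent (LinearMap.mulLeft k (w * x)) :=
    ((Commute.all w x).isNilpotent_mul_right hw).map (Algebra.lmul k A)
  rw [← mul_one x, ← hinv, ← heuler, ← trace_mulLeft_eq_of_isDual hinv hcb]
  exact (LinearMap.isNilpotent_trace_of_isNilpotent hwx).eq_zero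

open TensorProduct in
theorem stmt_19_general {k A : Type} [Field k] [IsAlgClosed k]
    [CommRing A] [Algebra k A]
    (B : LinearMap.BilinForm k A)
    (hinv : ∀ a b c : A, B (a * b) c = B a (b * c))
    (hnd : ∀ a : A, (∀ b : A, B a b = 0) → a = 0)
    {n : ℕ} (bA : Module.Basis (Fin n) k A)
    (D : A →ₗ[k] A ⊗[k] A)
    (hadj : ∀ a x y : A, (B.tmul B) (D a) (x ⊗ₜ[k] y) = B a (x * y)) :
    ((∃ ε : Module.Basis (Fin n) k A,
        (∀ i j, ε i * ε j = if i = j then ε i else 0) ∧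
        (∑ i, ε i = 1) ∧ (∀ i, B (ε i) 1 = 1)) →
      ∀ a : A, LinearMap.mul' k A (D a) = a) ∧
    ((∀ a : A, LinearMap.mul' k A (D a) = a) →
      ((⊥ : Ideal A).jacobson = ⊥ ∧
        ∃ ε : Module.Basis (Fin n) k A,
          (∀ i j, ε i * ε j = if i = j then ε i else 0) ∧
          (∑ i, ε i = 1) ∧ (∀ i, B (ε i) 1 = 1))) := by
  refine ⟨fun ⟨ε, hε, _, hl⟩ => ?_, fun h => ?_⟩
  · have hl_ne : ∀ i, B (ε i) 1 ≠ 0 := fun i => by simp [hl]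
    have handle : LinearMap.mul' k A ∘ₗ D = LinearMap.id := ε.ext fun m => by
      simp [mul'_apply_orthogonal_idempotent hinv hε hl_ne D hadj m, hl]
    exact LinearMap.congr_fun handle
  · have : Module.Finite k A := .of_basis bA
    have : IsArtinianRing A := IsArtinianRing.of_finite k A
    have : IsReduced A := isReduced_of_mul'_apply_eq_self hinv hnd D hadj h
    have : IsSemisimpleRing A := IsArtinianRing.isSemisimpleRing_of_isReduced A
    obtain ⟨ε, hε, hsum⟩ := exists_basis_orthogonal_idempotents bA
    refine ⟨Ideal.jacobson_bot.trans (IsSemisimpleRing.jacobson_eq_bot A), ε, hε, hsum, fun i => ?_⟩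
    have hεi := mul'_apply_orthogonal_idempotent hinv hε
      (apply_orthogonal_idempotent_one_ne_zero hinv hε hnd) D hadj i
    rw [h] at hεi
    exact inv_eq_one.mp <| smul_left_injective k (ε.ne_zero i) <| hεi.symm.trans (one_smul k _).symm

open TensorProduct in
/-- For a commutative Frobenius algebra over an algebraically
closed field of characteristic 0, with comultiplication `Δ` adjoint to the
multiplication `μ` (so `μ ∘ Δ` is the handle operator, multiplication by the
Euler element): if `A` is normalized semi-simple (idempotent basis `ε` with
`⟨εᵢ,1⟩ = 1`), then `μ ∘ Δ = id`; conversely, if `μ ∘ Δ = id`, then `A` is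
semi-simple (zero Jacobson radical) and normalized. -/
theorem stmt_19 {k A : Type} [Field k] [IsAlgClosed k] [CharZero k]
    [CommRing A] [Algebra k A]
    (B : LinearMap.BilinForm k A)
    (hinv : ∀ a b c : A, B (a * b) c = B a (b * c))
    (hnd : ∀ a : A, (∀ b : A, B a b = 0) → a = 0)
    {n : ℕ} (bA : Module.Basis (Fin n) k A)
    (D : A →ₗ[k] A ⊗[k] A)
    (hadj : ∀ a x y : A, (B.tmul B) (D a) (x ⊗ₜ[k] y) = B a (x * y)) :
    ((∃ ε : Module.Basis (Fin n) k A,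
        (∀ i j, ε i * ε j = if i = j then ε i else 0) ∧
        (∑ i, ε i = 1) ∧ (∀ i, B (ε i) 1 = 1)) →
      ∀ a : A, LinearMap.mul' k A (D a) = a) ∧
    ((∀ a : A, LinearMap.mul' k A (D a) = a) →
      ((⊥ : Ideal A).jacobson = ⊥ ∧
        ∃ ε : Module.Basis (Fin n) k A,
          (∀ i j, ε i * ε j = if i = j then ε i else 0) ∧
          (∑ i, ε i = 1) ∧ (∀ i, B (ε i) 1 = 1))) :=
  stmt_19_general B hinv hnd bA D hadj
end
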